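/- The vector field X₂ = (1/(ab)) ∂_a is a Killing vector of the conformally rescaled metric ds² = a g(b)² (2a db² + 4b da db) for any smooth positive function g(b); in particular for N²(a,b) = g(b)² a, one has L_{X₂}(N² ḡ) = 0. -/

import Mathlib

/-- Partial derivative of a real function on `Fin n → ℝ` in the `i`-th coordinate direction. -/
noncomputable def pd {n : ℕ} (f : (Fin n → ℝ) → ℝ) (i : Fin n) (x : Fin n → ℝ) : ℝ :=
  fderiv ℝ f x (Pi.single i 1)

/-- Coordinate expression of the Lie derivative of a (0,2)-tensor `g` along a vector field `ξ`:
`(L_ξ g)_{ij} = ξ^k ∂_k g_{ij} + g_{kj} ∂_i ξ^k + g_{ik} ∂_j ξ^k`. -/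
noncomputable def lieD {n : ℕ} (g : (Fin n → ℝ) → Fin n → Fin n → ℝ)
    (ξ : (Fin n → ℝ) → Fin n → ℝ) (x : Fin n → ℝ) (i j : Fin n) : ℝ :=
  (∑ k, ξ x k * pd (fun y => g y i j) k x)
    + (∑ k, g x k j * pd (fun y => ξ y k) i x)
    + (∑ k, g x i k * pd (fun y => ξ y k) j x)



section KillingHelpers

lemma pd_zero (i : Fin 2) (x : Fin 2 → ℝ) : pd (fun _ : Fin 2 → ℝ => (0:ℝ)) i x = 0 := by
  simp [pd]

lemma hproj (k : Fin 2) (x : Fin 2 → ℝ) :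
    HasFDerivAt (fun y : Fin 2 → ℝ => y k)
      (ContinuousLinearMap.proj (R := ℝ) (φ := fun _ : Fin 2 => ℝ) k) x :=
  hasFDerivAt_apply k x

lemma hinv1 (x : Fin 2 → ℝ) (hx1 : x 1 ≠ 0) :
    HasFDerivAt (fun y : Fin 2 → ℝ => (y 1)⁻¹)
      ((-((x 1)^2)⁻¹) • ContinuousLinearMap.proj (R := ℝ) (φ := fun _ : Fin 2 => ℝ) 1) x :=
  (hasDerivAt_inv hx1).comp_hasFDerivAt x (hproj 1 x)

lemma hinv0 (x : Fin 2 → ℝ) (hx0 : x 0 ≠ 0) :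
    HasFDerivAt (fun y : Fin 2 → ℝ => (y 0)⁻¹)
      ((-((x 0)^2)⁻¹) • ContinuousLinearMap.proj (R := ℝ) (φ := fun _ : Fin 2 => ℝ) 0) x :=
  (hasDerivAt_inv hx0).comp_hasFDerivAt x (hproj 0 x)

lemma pd_ii (x : Fin 2 → ℝ) (hx0 : x 0 ≠ 0) (hx1 : x 1 ≠ 0) (i : Fin 2) :
    pd (fun y : Fin 2 → ℝ => (y 1)⁻¹ * (y 0)⁻¹) i x
      = if i = 0 then (x 1)⁻¹ * (-((x 0)^2)⁻¹) else (x 0)⁻¹ * (-((x 1)^2)⁻¹) := by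
  have h := (hinv1 x hx1).mul (hinv0 x hx0)
  rw [pd, HasFDerivAt.fderiv (f := fun y : Fin 2 → ℝ => (y 1)⁻¹ * (y 0)⁻¹) h]
  fin_cases i <;> simp [Pi.single_eq_same, Pi.single_eq_of_ne]

lemma hgsq (gfun : ℝ → ℝ) (hgfun : ContDiff ℝ (⊤ : ℕ∞) gfun) (x : Fin 2 → ℝ) :
    HasFDerivAt (fun y : Fin 2 → ℝ => gfun (y 1) ^ 2)
      (((2:ℕ) * gfun (x 1) ^ 1 * deriv gfun (x 1)) •
        ContinuousLinearMap.proj (R := ℝ) (φ := fun _ : Fin 2 => ℝ) 1) x :=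
  by
  have hd := (hgfun.differentiable (by simp) (x 1)).hasDerivAt
  exact (hd.fun_pow 2).comp_hasFDerivAt x (hproj 1 x)

lemma pdA (gfun : ℝ → ℝ) (hgfun : ContDiff ℝ (⊤ : ℕ∞) gfun) (x : Fin 2 → ℝ) :
    pd (fun y : Fin 2 → ℝ => gfun (y 1) ^ 2 * y 0 * (2 * y 1)) 0 x
      = gfun (x 1) ^ 2 * (2 * x 1) := by
  have h := ((hgsq gfun hgfun x).mul (hproj 0 x)).mul ((hproj 1 x).const_mul 2)
  rw [pd, HasFDerivAt.fderiv (f := fun y : Fin 2 → ℝ => gfun (y 1) ^ 2 * y 0 * (2 * y 1)) h]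
  simp [Pi.single_eq_same, Pi.single_eq_of_ne]
  ring

lemma pdB (gfun : ℝ → ℝ) (hgfun : ContDiff ℝ (⊤ : ℕ∞) gfun) (x : Fin 2 → ℝ) :
    pd (fun y : Fin 2 → ℝ => gfun (y 1) ^ 2 * y 0 * (2 * y 0)) 0 x
      = gfun (x 1) ^ 2 * (4 * x 0) := by
  have h := ((hgsq gfun hgfun x).mul (hproj 0 x)).mul ((hproj 0 x).const_mul 2)
  rw [pd, HasFDerivAt.fderiv (f := fun y : Fin 2 → ℝ => gfun (y 1) ^ 2 * y 0 * (2 * y 0)) h]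
  simp [Pi.single_eq_same, Pi.single_eq_of_ne]
  ring

end KillingHelpers

/-- The vector `X₂ = (1/(ab)) ∂_a` is a Killing vector of the conformally rescaled metric
`N² ḡ` with `N² = g(b)² a`, where `ḡ` is the minisuperspace metric `2a db² + 4b da db`
and `g` is any smooth positive function: `L_{X₂}(N² ḡ) = 0`. -/
theorem stmt_14 (gfun : ℝ → ℝ) (hgfun : ContDiff ℝ (⊤ : ℕ∞) gfun) (hgpos : ∀ b, 0 < gfun b) :
    letI gbar : (Fin 2 → ℝ) → Fin 2 → Fin 2 → ℝ := fun x i j =>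
      if i = 0 then (if j = 0 then 0 else 2 * x 1)
      else (if j = 0 then 2 * x 1 else 2 * x 0)
    letI G : (Fin 2 → ℝ) → Fin 2 → Fin 2 → ℝ := fun x i j =>
      (gfun (x 1)) ^ 2 * x 0 * gbar x i j
    letI X₂ : (Fin 2 → ℝ) → Fin 2 → ℝ := fun x k => if k = 0 then (x 0 * x 1)⁻¹ else 0
    ∀ x : Fin 2 → ℝ, 0 < x 0 → 0 < x 1 →
      ∀ i j, lieD G X₂ x i j = 0 := by
  intro x hx0 hx1 i j
  have h0 := hx0.ne'
  have h1 := hx1.ne'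
  fin_cases i <;> fin_cases j <;>
    simp only [lieD, Fin.sum_univ_two] <;> norm_num <;>
    simp only [pdA gfun hgfun x, pdB gfun hgfun x, pd_zero, pd_ii x h0 h1] <;>
    norm_num <;> field_simp <;> ring
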